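/- arXiv:1512.05323 — 2 statements merged into one kernel-verified Lean document; each statement's English description precedes it below -/
import Mathlib

section
/- Asymptotic tail condition implies the tail condition (Lemma AsympTail): If condition (D) holds and moreover lim_{M→∞} lim_{R→∞} limsup_{N→∞} a_N^{-1} log E_{P^N}[e^{a_N φ⁺_R(ξ_N)} 1{φ⁺_R(ξ_N) ≥ M}] ≤ S*, then the tail condition (E) holds. -/
open MeasureTheory Filter Topology
open scoped ENNReal NNReal

noncomputable section

namespace PaperVaradhan

variable {X : Type*}

/-- The topological support of a measure: the set of points all of whose open
neighbourhoods have positive measure. -/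
def measSupport [TopologicalSpace X] [MeasurableSpace X] (μ : Measure X) : Set X :=
  {x | ∀ U : Set X, IsOpen U → x ∈ U → 0 < μ U}

/-- `supp{ξ_N}`: the union over `N` of the topological supports of the laws `P N`. -/
def suppAll [TopologicalSpace X] [MeasurableSpace X] (P : ℕ → Measure X) : Set X :=
  ⋃ N, measSupport (P N)

/-- `a_N⁻¹ · log v`, as an extended real number (`log` taken in `[-∞,∞]`). -/
def nlog (a : ℕ → ℝ) (N : ℕ) (v : ℝ≥0∞) : EReal :=
  (((a N)⁻¹ : ℝ) : EReal) * ENNReal.log v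

/-- The normalized logarithmic moment `a_N⁻¹ log E_{P^N}[e^{a_N ψ} 1_A]`. -/
def lexp [MeasurableSpace X] (P : ℕ → Measure X) (a : ℕ → ℝ) (ψ : X → EReal)
    (A : Set X) (N : ℕ) : EReal :=
  nlog a N (∫⁻ x in A, EReal.exp ((a N : EReal) * ψ x) ∂(P N))

/-- The large deviation lower bound with speed `a_N` and rate function `I`. -/
def LDPLowerBound [TopologicalSpace X] [MeasurableSpace X]
    (P : ℕ → Measure X) (a : ℕ → ℝ) (I : X → ℝ≥0∞) : Prop :=
  ∀ G : Set X, IsOpen G →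
    -(⨅ x ∈ G, (I x : EReal)) ≤ liminf (fun N => nlog a N (P N G)) atTop

/-- The large deviation upper bound with speed `a_N` and rate function `I`. -/
def LDPUpperBound [TopologicalSpace X] [MeasurableSpace X]
    (P : ℕ → Measure X) (a : ℕ → ℝ) (I : X → ℝ≥0∞) : Prop :=
  ∀ F : Set X, IsClosed F →
    limsup (fun N => nlog a N (P N F)) atTop ≤ -(⨅ x ∈ F, (I x : EReal))

/-- A good rate function: lower semicontinuous with compact sublevel sets. -/
def GoodRateFunction [TopologicalSpace X] (I : X → ℝ≥0∞) : Prop :=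
  LowerSemicontinuous I ∧ ∀ c : ℝ≥0∞, c ≠ ⊤ → IsCompact {x | I x ≤ c}

/-- `S* = sup { φ(x) - I(x) : x ∈ X, I(x) < ∞ }`. -/
def Sstar (φ : X → EReal) (I : X → ℝ≥0∞) : EReal :=
  ⨆ (x : X) (_ : I x ≠ ⊤), (φ x - (I x : EReal))

/-- Condition (A): the family `φm = (φ⁻_R)` approximates `φ` from below near every
point of finite rate. -/
def CondA [TopologicalSpace X] [MeasurableSpace X]
    (P : ℕ → Measure X) (φ : X → EReal) (I : X → ℝ≥0∞) (φm : ℝ → X → EReal) : Prop :=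
  ∀ x : X, I x ≠ ⊤ → ∀ δ : ℝ, 0 < δ →
    ∃ Rstar : ℝ, 0 < Rstar ∧ ∀ R : ℝ, Rstar < R →
      ∃ U : Set X, IsOpen U ∧ x ∈ U ∧
        ∀ y ∈ U ∩ suppAll P, φ x - (δ : EReal) ≤ φm R y

/-- Condition (B): the family `φp = (φ⁺_R)` approximates `max(S*, φ)` from above near
every point of finite rate, uniformly for all large `R`. -/
def CondB [TopologicalSpace X] [MeasurableSpace X]
    (P : ℕ → Measure X) (φ : X → EReal) (I : X → ℝ≥0∞) (φp : ℝ → X → EReal) : Prop :=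
  ∃ Rstar : ℝ, 0 < Rstar ∧ ∀ R : ℝ, Rstar < R →
    ∀ x : X, I x ≠ ⊤ → ∀ δ : ℝ, 0 < δ →
      ∃ U : Set X, IsOpen U ∧ x ∈ U ∧
        ∀ y ∈ U ∩ suppAll P, φp R y ≤ max (Sstar φ I) (φ x) + (δ : EReal)

/-- Condition (C): restricting the integral of `e^{a_N φ⁻_R}` to the event
`{φ > φ⁻_R - ε}` does not change the limit (in `R`) of the `liminf` (in `N`) of the
normalized logarithms. -/
def CondC [TopologicalSpace X] [MeasurableSpace X] (P : ℕ → Measure X) (a : ℕ → ℝ)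
    (φ : X → EReal) (φm : ℝ → X → EReal) : Prop :=
  ∀ ε : ℝ, 0 < ε → ∃ L : EReal,
    Tendsto (fun R : ℝ =>
        liminf (fun N => lexp P a (φm R) {y | φm R y - (ε : EReal) < φ y} N) atTop)
      atTop (𝓝 L) ∧
    Tendsto (fun R : ℝ =>
        liminf (fun N => lexp P a (φm R) Set.univ N) atTop)
      atTop (𝓝 L)

/-- Condition (D): the contribution of the event `{φ > φ⁺_R + ε}` is bounded by `S*`. -/
def CondD [TopologicalSpace X] [MeasurableSpace X] (P : ℕ → Measure X) (a : ℕ → ℝ)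
    (φ : X → EReal) (I : X → ℝ≥0∞) (φp : ℝ → X → EReal) : Prop :=
  ∀ ε : ℝ, 0 < ε →
    limsup (fun R : ℝ =>
        limsup (fun N => lexp P a φ {y | φp R y + (ε : EReal) < φ y} N) atTop)
      atTop ≤ Sstar φ I

/-- The tail condition (E). -/
def CondE [TopologicalSpace X] [MeasurableSpace X] (P : ℕ → Measure X) (a : ℕ → ℝ)
    (φ : X → EReal) (I : X → ℝ≥0∞) : Prop :=
  limsup (fun M : ℝ =>
      limsup (fun N => lexp P a φ {y | (M : EReal) ≤ φ y} N) atTop)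
    atTop ≤ Sstar φ I

/-!
On `{φ ≥ M}`, either `φ > φ⁺_R + ε`, an event controlled by (D), or `φ⁺_R ≥ M - ε` and
`e^{a_N φ} ≤ e^{a_N ε} e^{a_N φ⁺_R}`. Since `a_N⁻¹ log (u + v) ≤ max (a_N⁻¹ log u, a_N⁻¹ log v)
+ a_N⁻¹ log 2` and `a_N → ∞`, letting `N`, `R`, `M → ∞` bounds the tail of `φ` by
`max (S*, ε + S*)`; then let `ε → 0`.
-/

theorem _root_.EReal.le_of_forall_pos_le_add {x y : EReal}
    (h : ∀ ε : ℝ, 0 < ε → x ≤ y + ε) : x ≤ y := by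
  refine EReal.le_of_forall_lt_iff_le.1 fun z hz => ?_
  induction y using EReal.rec with
  | bot => simp [(by simpa using h 1 one_pos : x = ⊥)]
  | coe y =>
    have hyz : y < z := EReal.coe_lt_coe_iff.1 hz
    simpa [← EReal.coe_add, ← EReal.coe_sub] using h (z - y) (sub_pos.2 hyz)
  | top => exact absurd hz (not_lt.2 le_top)

section Limsup

variable {α : Type*} {f : Filter α} [f.NeBot]

theorem _root_.EReal.limsup_add_coe_le_of_tendsto_zero {u : α → EReal} {c : α → ℝ}
    (hc : Tendsto c f (𝓝 0)) :
    limsup (fun i => u i + c i) f ≤ limsup u f := by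
  have hc0 : limsup (fun i => (c i : EReal)) f = 0 := by
    have h := ((continuous_coe_real_ereal.tendsto 0).comp hc).limsup_eq
    rwa [EReal.coe_zero] at h
  have := EReal.limsup_add_le (u := u) (v := fun i => (c i : EReal)) (f := f)
    (.inr (by simp [hc0])) (.inr (by simp [hc0]))
  rwa [hc0, add_zero] at this

theorem _root_.EReal.limsup_coe_add_le (x : ℝ) (u : α → EReal) :
    limsup (fun i => x + u i) f ≤ x + limsup u f := by
  have := EReal.limsup_add_le (u := fun _ => (x : EReal)) (v := u) (f := f)
    (.inl (by simp)) (.inl (by simp))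
  rwa [limsup_const] at this

end Limsup

theorem _root_.Filter.limsup_comp_sub_const_atTop {β : Type*} [ConditionallyCompleteLattice β]
    (u : ℝ → β) (c : ℝ) :
    limsup (fun x => u (x - c)) atTop = limsup u atTop := by
  rw [show (fun x => u (x - c)) = u ∘ fun x => x - c from rfl, limsup_comp]
  exact congrArg _ (OrderIso.subRight c).map_atTop

section NLog

variable {a : ℕ → ℝ} {N : ℕ}

theorem nlog_mono (ha : 0 < a N) : Monotone (nlog a N) := fun _ _ h =>
  mul_le_mul_of_nonneg_left (ENNReal.log_monotone h) (by exact_mod_cast (inv_pos.2 ha).le)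

theorem nlog_mul (ha : 0 < a N) (u v : ℝ≥0∞) :
    nlog a N (u * v) = nlog a N u + nlog a N v := by
  rw [nlog, ENNReal.log_mul_add,
    EReal.left_distrib_of_nonneg_of_ne_top (by exact_mod_cast (inv_pos.2 ha).le) (by simp)]
  rfl

theorem nlog_exp_mul (ha : 0 < a N) (x : EReal) :
    nlog a N (EReal.exp (a N * x)) = x := by
  rw [nlog, EReal.log_exp, ← mul_assoc, ← EReal.coe_mul, inv_mul_cancel₀ ha.ne', EReal.coe_one,
    one_mul]

theorem nlog_add_le (ha : 0 < a N) (u v : ℝ≥0∞) :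
    nlog a N (u + v) ≤ max (nlog a N u) (nlog a N v) + (((a N)⁻¹ * Real.log 2 : ℝ) : EReal) := by
  have hlog2 : nlog a N 2 = (((a N)⁻¹ * Real.log 2 : ℝ) : EReal) := by
    rw [nlog, show (2 : ℝ≥0∞) = ENNReal.ofReal 2 by simp, ENNReal.log_ofReal_of_pos two_pos,
      EReal.coe_mul]
  calc nlog a N (u + v) ≤ nlog a N (2 * max u v) :=
        nlog_mono ha (two_mul (max u v) ▸ add_le_add (le_max_left u v) (le_max_right u v))
    _ = max (nlog a N u) (nlog a N v) + (((a N)⁻¹ * Real.log 2 : ℝ) : EReal) := by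
        rw [nlog_mul ha, (nlog_mono ha).map_max, hlog2, add_comm]

end NLog

section LExp

variable [MeasurableSpace X] (P : ℕ → Measure X) {a : ℕ → ℝ} {N : ℕ}

theorem lexp_add_const (ha : 0 < a N) (ψ : X → EReal) (ε : ℝ) (A : Set X) :
    lexp P a (fun y => ψ y + ε) A N = ε + lexp P a ψ A N := by
  have hexp : ∀ y, EReal.exp (a N * (ψ y + ε)) = EReal.exp (a N * ε) * EReal.exp (a N * ψ y) :=
    fun y => by
      rw [EReal.left_distrib_of_nonneg_of_ne_top (by exact_mod_cast ha.le) (EReal.coe_ne_top _),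
        add_comm, EReal.exp_add]
  simp only [lexp, hexp]
  rw [lintegral_const_mul' _ _ (by simp [← EReal.coe_mul]), nlog_mul ha, nlog_exp_mul ha]

theorem setLIntegral_exp_superlevel_le {μ : Measure X} {t : ℝ} (ht : 0 ≤ t)
    (φ ψ : X → EReal) (hψ : Measurable ψ) (M ε : ℝ) :
    ∫⁻ x in {y | (M : EReal) ≤ φ y}, EReal.exp (t * φ x) ∂μ ≤
      ∫⁻ x in {y | ψ y + ε < φ y}, EReal.exp (t * φ x) ∂μ +
        ∫⁻ x in {y | ((M - ε : ℝ) : EReal) ≤ ψ y}, EReal.exp (t * (ψ x + ε)) ∂μ := by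
  set A := {y | (M : EReal) ≤ φ y}
  set B := {y | ψ y + ε < φ y}
  have ht' : (0 : EReal) ≤ t := by exact_mod_cast ht
  have hg : Measurable fun x => EReal.exp (t * (ψ x + ε)) :=
    (Monotone.measurable fun u v h => EReal.exp_monotone
      (mul_le_mul_of_nonneg_left (add_le_add_left h _) ht')).comp hψ
  calc ∫⁻ x in A, EReal.exp (t * φ x) ∂μ
      ≤ ∫⁻ x in A ∩ B, EReal.exp (t * φ x) ∂μ + ∫⁻ x in A \ B, EReal.exp (t * φ x) ∂μ := by
        conv_lhs => rw [← Set.inter_union_sdiff A B]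
        exact lintegral_union_le _ _ _
    _ ≤ ∫⁻ x in B, EReal.exp (t * φ x) ∂μ + ∫⁻ x in A \ B, EReal.exp (t * (ψ x + ε)) ∂μ :=
        add_le_add (lintegral_mono_set Set.inter_subset_right) (setLIntegral_mono hg
          fun x hx => EReal.exp_monotone (mul_le_mul_of_nonneg_left (not_lt.1 hx.2) ht'))
    _ ≤ _ := by
        refine add_le_add_right (lintegral_mono_set fun x hx => ?_) _
        show ((M - ε : ℝ) : EReal) ≤ ψ x
        rw [EReal.coe_sub, EReal.sub_le_iff_le_add (.inl (EReal.coe_ne_bot ε))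
          (.inl (EReal.coe_ne_top ε))]
        exact hx.1.trans (not_lt.1 hx.2)

theorem lexp_superlevel_le (ha : 0 < a N) (φ ψ : X → EReal) (hψ : Measurable ψ) (M ε : ℝ) :
    lexp P a φ {y | (M : EReal) ≤ φ y} N ≤
      max (lexp P a φ {y | ψ y + ε < φ y} N)
          (ε + lexp P a ψ {y | ((M - ε : ℝ) : EReal) ≤ ψ y} N)
        + (((a N)⁻¹ * Real.log 2 : ℝ) : EReal) := by
  rw [← lexp_add_const P ha]
  exact (nlog_mono ha (setLIntegral_exp_superlevel_le ha.le φ ψ hψ M ε)).trans (nlog_add_le ha _ _)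

theorem limsup_lexp_superlevel_le (ha : ∀ N, 0 < a N) (haTop : Tendsto a atTop atTop)
    (φ ψ : X → EReal) (hψ : Measurable ψ) (M ε : ℝ) :
    limsup (fun N => lexp P a φ {y | (M : EReal) ≤ φ y} N) atTop ≤
      max (limsup (fun N => lexp P a φ {y | ψ y + ε < φ y} N) atTop)
        (ε + limsup (fun N => lexp P a ψ {y | ((M - ε : ℝ) : EReal) ≤ ψ y} N) atTop) := by
  have hlog2 : Tendsto (fun N => (a N)⁻¹ * Real.log 2) atTop (𝓝 0) := by
    simpa using haTop.inv_tendsto_atTop.mul_const (Real.log 2)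
  calc _ ≤ limsup (fun N => max (lexp P a φ {y | ψ y + ε < φ y} N)
            (ε + lexp P a ψ {y | ((M - ε : ℝ) : EReal) ≤ ψ y} N)
          + (((a N)⁻¹ * Real.log 2 : ℝ) : EReal)) atTop :=
        limsup_le_limsup (.of_forall fun N => lexp_superlevel_le P (ha N) φ ψ hψ M ε)
    _ ≤ limsup (fun N => max (lexp P a φ {y | ψ y + ε < φ y} N)
            (ε + lexp P a ψ {y | ((M - ε : ℝ) : EReal) ≤ ψ y} N)) atTop :=
        EReal.limsup_add_coe_le_of_tendsto_zero hlog2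
    _ ≤ _ := by
        rw [limsup_max]
        exact max_le_max le_rfl (EReal.limsup_coe_add_le _ _)

end LExp

theorem condE_of_condD_of_asymptotic_tail_general
    [TopologicalSpace X] [MeasurableSpace X]
    (P : ℕ → Measure X)
    (a : ℕ → ℝ) (haPos : ∀ N, 0 < a N) (haTop : Tendsto a atTop atTop)
    (I : X → ℝ≥0∞)
    (φ : X → EReal)
    (φp : ℝ → X → EReal) (hφp : ∀ R, Measurable (φp R))
    (hD : CondD P a φ I φp)
    (hTail : limsup (fun M : ℝ =>
        limsup (fun R : ℝ =>
            limsup (fun N => lexp P a (φp R) {y | (M : EReal) ≤ φp R y} N) atTop)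
          atTop) atTop ≤ Sstar φ I) :
    CondE P a φ I := by
  refine EReal.le_of_forall_pos_le_add fun ε hε => ?_
  set T : ℝ → EReal := fun M => limsup (fun R : ℝ =>
    limsup (fun N => lexp P a (φp R) {y | (M : EReal) ≤ φp R y} N) atTop) atTop
  have htail : ∀ M : ℝ, limsup (fun N => lexp P a φ {y | (M : EReal) ≤ φ y} N) atTop ≤
      max (Sstar φ I) (ε + T (M - ε)) := fun M => calc
    _ = limsup (fun _ : ℝ => limsup (fun N => lexp P a φ {y | (M : EReal) ≤ φ y} N) atTop)
          atTop := (limsup_const _).symm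
    _ ≤ limsup (fun R => max
          (limsup (fun N => lexp P a φ {y | φp R y + ε < φ y} N) atTop)
          (ε + limsup (fun N => lexp P a (φp R) {y | ((M - ε : ℝ) : EReal) ≤ φp R y} N) atTop))
          atTop :=
        limsup_le_limsup (.of_forall fun R =>
          limsup_lexp_superlevel_le P haPos haTop φ (φp R) (hφp R) M ε)
    _ ≤ _ := by
        rw [limsup_max]
        exact max_le_max (hD ε hε) (EReal.limsup_coe_add_le _ _)
  calc _ ≤ limsup (fun M : ℝ => max (Sstar φ I) (ε + T (M - ε))) atTop :=
        limsup_le_limsup (.of_forall htail)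
    _ ≤ max (Sstar φ I) (ε + limsup T atTop) := by
        rw [limsup_max, limsup_const, ← Filter.limsup_comp_sub_const_atTop T ε]
        exact max_le_max le_rfl (EReal.limsup_coe_add_le _ _)
    _ ≤ Sstar φ I + ε := by
        rw [add_comm (ε : EReal)]
        exact max_le (le_add_of_nonneg_right (by exact_mod_cast hε.le)) (add_le_add_left hTail _)

/-- **Asymptotic tail condition implies the tail condition** (Lemma `AsympTail`).
If condition (D) holds and moreover
`lim_{M→∞} lim_{R→∞} limsup_{N→∞} a_N⁻¹ log E_{P^N}[e^{a_N φ⁺_R(ξ_N)} 1{φ⁺_R(ξ_N) ≥ M}] ≤ S*`,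
then the tail condition (E) holds. -/
theorem condE_of_condD_of_asymptotic_tail
    [TopologicalSpace X] [RegularSpace X] [MeasurableSpace X] [BorelSpace X]
    (P : ℕ → Measure X) (hP : ∀ N, IsProbabilityMeasure (P N))
    (a : ℕ → ℝ) (haPos : ∀ N, 0 < a N) (haTop : Tendsto a atTop atTop)
    (I : X → ℝ≥0∞)
    (φ : X → EReal) (hφ : Measurable φ)
    (φp : ℝ → X → EReal) (hφp : ∀ R, Measurable (φp R))
    (hD : CondD P a φ I φp)
    (hTail : limsup (fun M : ℝ =>
        limsup (fun R : ℝ =>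
            limsup (fun N => lexp P a (φp R) {y | (M : EReal) ≤ φp R y} N) atTop)
          atTop) atTop ≤ Sstar φ I) :
    CondE P a φ I :=
  condE_of_condD_of_asymptotic_tail_general P a haPos haTop I φ φp hφp hD hTail

end PaperVaradhan
end
end

section
/- Continuity of the marginal-flow map Π (Lemma MapPi::Cont): The map Π : M₁(T^d × W × C([0,T],ℝ)) → 𝒞 = C([0,T], M₁(T^d×W×ℝ)) is continuous, where M₁(T^d × W × C([0,T],ℝ)) carries the topology of weak convergence and 𝒞 the topology of uniform convergence. Equivalently, if Q^(n) → Q weakly in M₁(T^d × W × C([0,T],ℝ)), then for every bounded Lipschitz continuous f : T^d × W × ℝ → ℝ, sup_{t∈[0,T]} | ∫ f d(Π(Q^(n))_t) − ∫ f d(Π(Q)_t) | → 0 as n → ∞, i.e. Π(Q^(n))_t → Π(Q)_t weakly, uniformly in t ∈ [0,T]. -/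
/-! `Π(Q)_t` is the pushforward of `Q ⊗ δ_t` under the continuous map `((x,w,θ),t) ↦ (x,w,θ_t)`.
Products of weakly convergent probability measures on separable metrizable spaces converge
weakly, and so does `δ_t` as `t` moves, so `(Q,t) ↦ ∫ f dΠ(Q)_t` is jointly continuous for bounded
continuous `f`. Joint continuity with `t` ranging over the compact interval `[0,T]` turns
convergence `Q_n → Q` into convergence uniform in `t`. -/

open MeasureTheory Filter Topology
open scoped ENNReal NNReal Classical

noncomputable section

set_option synthInstance.maxSize 1000
set_option synthInstance.maxHeartbeats 1000000
set_option maxHeartbeats 1000000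

namespace PaperPath

/-- The `d`-dimensional torus `T^d = ℝ^d/ℤ^d`. -/
abbrev Td (d : ℕ) : Type := Fin d → UnitAddCircle

/-- The path space `C([0,T], ℝ)` of continuous real-valued paths, with the topology of
uniform convergence (the compact-open topology). -/
abbrev PathSp (T : ℝ) : Type := C(↥(Set.Icc (0 : ℝ) T), ℝ)

/-- The Borel σ-algebra on the path space. -/
instance (T : ℝ) : MeasurableSpace (PathSp T) := borel _

instance (T : ℝ) : BorelSpace (PathSp T) := ⟨rfl⟩

/-- The projection of `A ⊆ T^d × W × C([0,T],ℝ)` onto the path component. -/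
def ProjC {d m : ℕ} {W : Set (EuclideanSpace ℝ (Fin m))} {T : ℝ}
    (A : Set (Td d × ↥W × PathSp T)) : Set (PathSp T) :=
  {θ | ∃ x w, (x, w, θ) ∈ A}

/-- The projection of `A ⊆ T^d × W × C([0,T],ℝ)` onto the environment component. -/
def ProjW {d m : ℕ} {W : Set (EuclideanSpace ℝ (Fin m))} {T : ℝ}
    (A : Set (Td d × ↥W × PathSp T)) : Set ↥W :=
  {w | ∃ x θ, (x, w, θ) ∈ A}

/-- The evaluation map `(x, w, θ_{[0,T]}) ↦ (x, w, θ_t)` is measurable. -/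
lemma measurable_eval {d m : ℕ} (W : Set (EuclideanSpace ℝ (Fin m))) (T : ℝ)
    (t : ↥(Set.Icc (0 : ℝ) T)) :
    Measurable fun p : Td d × ↥W × PathSp T => (p.1, p.2.1, p.2.2 t) :=
  measurable_fst.prodMk (measurable_snd.fst.prodMk
    (((ContinuousEvalConst.continuous_eval_const t).measurable).comp measurable_snd.snd))

/-- `Π(Q)_t`: the one-dimensional (time-`t`) marginal of `Q`, i.e. the pushforward of
`Q ∈ M₁(T^d × W × C([0,T],ℝ))` under the evaluation map `(x,w,θ) ↦ (x,w,θ_t)`. -/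
def piMapAt {d m : ℕ} (W : Set (EuclideanSpace ℝ (Fin m))) (T : ℝ)
    (Q : ProbabilityMeasure (Td d × ↥W × PathSp T)) (t : ↥(Set.Icc (0 : ℝ) T)) :
    ProbabilityMeasure (Td d × ↥W × ℝ) :=
  Q.map (measurable_eval W T t).aemeasurable

end PaperPath

theorem tendstoUniformly_of_continuous_uncurry_of_tendsto {α β γ ι : Type*} [TopologicalSpace α]
    [TopologicalSpace β] [CompactSpace β] [UniformSpace γ] {Φ : α → β → γ}
    (hΦ : Continuous (Function.uncurry Φ)) {u : ι → α} {l : Filter ι} {a : α}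
    (hu : Tendsto u l (𝓝 a)) :
    TendstoUniformly (fun i => Φ (u i)) (Φ a) l :=
  ContinuousMap.tendsto_iff_tendstoUniformly.mp
    ((ContinuousMap.curry ⟨_, hΦ⟩).continuous.continuousAt.tendsto.comp hu)

namespace MeasureTheory.ProbabilityMeasure

theorem map_prod_diracProba {Ω Z Ω' : Type*} [MeasurableSpace Ω] [MeasurableSpace Z]
    [MeasurableSpace Ω'] (P : ProbabilityMeasure Ω) (z : Z) {g : Ω × Z → Ω'}
    (hg : Measurable g) :
    (P.prod (diracProba z)).map hg.aemeasurable =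
      P.map (hg.comp (measurable_prodMk_right (y := z))).aemeasurable := by
  apply Subtype.ext
  simp only [val_eq_to_measure, toMeasure_map, toMeasure_prod]
  rw [← Measure.map_map hg measurable_prodMk_right, ← Measure.prod_dirac]
  rfl

theorem continuous_map_prod_diracProba {Ω Z Ω' : Type*} [TopologicalSpace Ω]
    [MeasurableSpace Ω] [OpensMeasurableSpace Ω] [SecondCountableTopology Ω]
    [TopologicalSpace.PseudoMetrizableSpace Ω] [TopologicalSpace Z] [MeasurableSpace Z]
    [OpensMeasurableSpace Z] [SecondCountableTopology Z] [TopologicalSpace.PseudoMetrizableSpace Z]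
    [TopologicalSpace Ω'] [MeasurableSpace Ω'] [BorelSpace Ω'] {g : Ω × Z → Ω'}
    (hg : Continuous g) :
    Continuous fun p : ProbabilityMeasure Ω × Z =>
      (p.1.prod (diracProba p.2)).map hg.measurable.aemeasurable :=
  (continuous_map hg).comp
    (continuous_prod.comp (continuous_fst.prodMk (continuous_diracProba.comp continuous_snd)))

end MeasureTheory.ProbabilityMeasure

namespace PaperPath

theorem continuous_piMapAt {d m : ℕ} (W : Set (EuclideanSpace ℝ (Fin m))) (T : ℝ) :
    Continuous fun p : ProbabilityMeasure (Td d × ↥W × PathSp T) × ↥(Set.Icc (0 : ℝ) T) =>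
      piMapAt W T p.1 p.2 := by
  have hev : Continuous fun q : (Td d × ↥W × PathSp T) × ↥(Set.Icc (0 : ℝ) T) =>
      (q.1.1, q.1.2.1, q.1.2.2 q.2) := by
    fun_prop
  convert ProbabilityMeasure.continuous_map_prod_diracProba hev using 2 with p
  exact (ProbabilityMeasure.map_prod_diracProba p.1 p.2 hev.measurable).symm

theorem piMap_continuous_general
    {d m : ℕ} (W : Set (EuclideanSpace ℝ (Fin m)))
    (T : ℝ)
    (Qn : ℕ → ProbabilityMeasure (Td d × ↥W × PathSp T))
    (Q : ProbabilityMeasure (Td d × ↥W × PathSp T))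
    (hQn : Tendsto Qn atTop (𝓝 Q))
    (f : Td d × ↥W × ℝ → ℝ) (K : ℝ≥0) (hfL : LipschitzWith K f)
    (hfb : ∃ C : ℝ, ∀ z, |f z| ≤ C) :
    TendstoUniformly
      (fun n (t : ↥(Set.Icc (0 : ℝ) T)) =>
        ∫ z, f z ∂(piMapAt W T (Qn n) t : Measure (Td d × ↥W × ℝ)))
      (fun t => ∫ z, f z ∂(piMapAt W T Q t : Measure (Td d × ↥W × ℝ)))
      atTop := by
  obtain ⟨C, hC⟩ := hfb
  let F := BoundedContinuousFunction.ofNormedAddCommGroup f hfL.continuous C hC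
  have hΦ : Continuous (Function.uncurry fun (P : ProbabilityMeasure (Td d × ↥W × PathSp T))
      (t : ↥(Set.Icc (0 : ℝ) T)) => ∫ z, f z ∂(piMapAt W T P t : Measure (Td d × ↥W × ℝ))) :=
    (ProbabilityMeasure.continuous_integral_boundedContinuousFunction F).comp
      (continuous_piMapAt W T)
  exact tendstoUniformly_of_continuous_uncurry_of_tendsto hΦ hQn

/-- **Continuity of the marginal-flow map `Π`** (Lemma `MapPi::Cont`).
If `Q^(n) → Q` weakly in `M₁(T^d × W × C([0,T],ℝ))`, then for every bounded Lipschitz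
continuous `f : T^d × W × ℝ → ℝ`, the integrals `∫ f dΠ(Q^(n))_t` converge to
`∫ f dΠ(Q)_t` uniformly in `t ∈ [0,T]`; i.e. `Π(Q^(n))_t → Π(Q)_t` weakly, uniformly in
`t`.  In other words, `Π : M₁(T^d × W × C([0,T],ℝ)) → C([0,T], M₁(T^d × W × ℝ))` is
continuous for the topology of uniform convergence on the target. -/
theorem piMap_continuous
    {d m : ℕ} (W : Set (EuclideanSpace ℝ (Fin m))) (hW : IsClosed W)
    (T : ℝ) (hT : 0 < T)
    (Qn : ℕ → ProbabilityMeasure (Td d × ↥W × PathSp T))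
    (Q : ProbabilityMeasure (Td d × ↥W × PathSp T))
    (hQn : Tendsto Qn atTop (𝓝 Q))
    (f : Td d × ↥W × ℝ → ℝ) (K : ℝ≥0) (hfL : LipschitzWith K f)
    (hfb : ∃ C : ℝ, ∀ z, |f z| ≤ C) :
    TendstoUniformly
      (fun n (t : ↥(Set.Icc (0 : ℝ) T)) =>
        ∫ z, f z ∂(piMapAt W T (Qn n) t : Measure (Td d × ↥W × ℝ)))
      (fun t => ∫ z, f z ∂(piMapAt W T Q t : Measure (Td d × ↥W × ℝ)))
      atTop :=
  piMap_continuous_general W T Qn Q hQn f K hfL hfb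

end PaperPath
end
end
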